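/- For every type α, every list xs : List α, and every k : ℕ with 1 ≤ k and k < length xs (equivalently 2 ≤ 1 + k ≤ length xs), up (ch k xs) = mapB subs (ch (1+k) xs). -/
import Mathlib


def subs {α : Type} : List α → List (List α)
  | [] => []
  | x :: xs => (subs xs).map (x :: ·) ++ [xs]

def choose {α : Type} : ℕ → List α → List (List α)
  | 0, _ => [[]]
  | k+1, xs =>
    if k + 1 = xs.length then [xs]
    else
      match xs with
      | [] => []
      | x :: xs' => (choose k xs').map (x :: ·) ++ choose (k+1) xs'

inductive B (α : Type) : Type
  | T : α → B α
  | N : B α → B α → B α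

def mapB {α β : Type} (f : α → β) : B α → B β
  | .T a => .T (f a)
  | .N t u => .N (mapB f t) (mapB f u)

def zipBW {α β γ : Type} (f : α → β → γ) : B α → B β → B γ
  | .T a, .T b => .T (f a b)
  | .N t u, .N t' u' => .N (zipBW f t t') (zipBW f u u')
  | .T a, v => mapB (f a) v
  | v, .T b => mapB (f · b) v

def ch {α : Type} : ℕ → List α → B (List α)
  | 0, _ => .T []
  | k+1, xs =>
    if k + 1 = xs.length then .T xs
    else
      match xs with
      | [] => .T []
      | x :: xs' => .N (mapB (x :: ·) (ch k xs')) (ch (k+1) xs')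

def snoc {α : Type} (ys : List α) (z : α) : List α := ys ++ [z]

def unT {α : Type} [Inhabited α] : B α → α
  | .T p => p
  | .N _ _ => default

def up {α : Type} : B α → B (List α)
  | .N (.T p) (.T q) => .T [p, q]
  | .N t (.T q) => .T (unT (up t) ++ [q])
  | .N (.T p) u => .N (mapB (fun q => [p, q]) u) (up u)
  | .N t u => .N (zipBW snoc (up t) u) (up u)
  | .T p => .T [p]

def ex {α : Type} [Inhabited α] : List α → α
  | [x] => x
  | _ => default

def td {X Y : Type} [Inhabited X] [Inhabited Y] (f : X → Y) (g : List Y → Y) : ℕ → List X → Y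
  | 0, xs => f (ex xs)
  | n+1, xs => g ((subs xs).map (td f g n))

def td' {Y : Type} [Inhabited Y] (g : List Y → Y) : ℕ → List Y → Y
  | 0, xs => ex xs
  | n+1, xs => g ((subs xs).map (td' g n))

lemma mapB_mapB {α β γ : Type} (f : β → γ) (g : α → β) (w : B α) :
    mapB f (mapB g w) = mapB (fun a => f (g a)) w := by
  induction w with
  | T a => simp [mapB]
  | N t u iht ihu => simp [mapB, iht, ihu]

lemma unT_mapB {α β : Type} (f : α → β) (w : B (List α)) :
    unT (mapB (List.map f) w) = List.map f (unT w) := by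
  cases w <;> rfl

lemma zipBW_snoc_map {α β : Type} (f : α → β) (w : B (List α)) (u : B α) :
    zipBW snoc (mapB (List.map f) w) (mapB f u) = mapB (List.map f) (zipBW snoc w u) := by
  induction w generalizing u with
  | T a =>
    cases u with
    | T b => simp [mapB, zipBW, snoc]
    | N u1 u2 =>
      simp [mapB, zipBW, mapB_mapB, snoc]
  | N t1 t2 iht1 iht2 =>
    cases u with
    | T b =>
      simp [mapB, zipBW, mapB_mapB, snoc]
    | N u1 u2 => simp [mapB, zipBW, iht1, iht2]

lemma zipBW_mapB_self {α β : Type} (f : β → α → β) (g : α → β) (w : B α) :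
    zipBW f (mapB g w) w = mapB (fun a => f (g a) a) w := by
  induction w with
  | T a => simp [mapB, zipBW]
  | N t u iht ihu => simp [mapB, zipBW, iht, ihu]

lemma up_mapB {α β : Type} (f : α → β) (v : B α) :
    up (mapB f v) = mapB (List.map f) (up v) := by
  induction v with
  | T p => simp [mapB, up]
  | N t u iht ihu =>
    cases t with
    | T p =>
      cases u with
      | T q => simp [mapB, up]
      | N u1 u2 =>
        simp only [mapB, up, ihu, mapB_mapB]
        congr 1
    | N t1 t2 =>
      cases u with
      | T q =>
        simp only [mapB, up]
        rw [show B.N (mapB f t1) (mapB f t2) = mapB f (B.N t1 t2) from rfl, iht, unT_mapB]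
        simp
      | N u1 u2 =>
        simp only [mapB, up]
        rw [show B.N (mapB f t1) (mapB f t2) = mapB f (B.N t1 t2) from rfl, iht,
            show B.N (mapB f u1) (mapB f u2) = mapB f (B.N u1 u2) from rfl, ihu,
            zipBW_snoc_map]

lemma ch_zero {α : Type} (xs : List α) : ch 0 xs = .T [] := by simp [ch]

lemma ch_cons_lt {α : Type} (j : ℕ) (x : α) (xs : List α) (h : j + 1 < (x :: xs).length) :
    ch (j+1) (x :: xs) = .N (mapB (x :: ·) (ch j xs)) (ch (j+1) xs) := by
  have hne : ¬ j = xs.length := by simp at h; omega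
  simp [ch, hne]

lemma ch_eq_tip {α : Type} (j : ℕ) (xs : List α) (h : j + 1 = xs.length) :
    ch (j+1) xs = .T xs := by
  cases xs with
  | nil => simp at h
  | cons y ys => simp only [ch, if_pos h]

lemma ch_isN {α : Type} (k : ℕ) (xs : List α) (hk1 : 1 ≤ k) (hk2 : k < xs.length) :
    ∃ a b, ch k xs = .N a b := by
  obtain ⟨j, rfl⟩ : ∃ j, k = j + 1 := ⟨k - 1, by omega⟩
  cases xs with
  | nil => simp at hk2
  | cons x xs => exact ⟨_, _, ch_cons_lt j x xs hk2⟩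

lemma mapB_ch_one {α β : Type} (f g : List α → β) (hfg : ∀ y : α, f [y] = g [y]) :
    ∀ xs : List α, 1 ≤ xs.length → mapB f (ch 1 xs) = mapB g (ch 1 xs) := by
  intro xs
  induction xs with
  | nil => simp
  | cons x xs ihxs =>
    intro _
    by_cases hx : xs.length = 0
    · obtain rfl : xs = [] := List.length_eq_zero_iff.mp hx
      rw [ch_eq_tip 0 [x] (by simp)]
      simp [mapB, hfg]
    · rw [ch_cons_lt 0 x xs (by simp; omega)]
      have h1 := ihxs (by omega)
      simp only [mapB, h1]
      rw [ch_zero xs]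
      simp [mapB, hfg]

theorem stmt2 {α : Type} (xs : List α) (k : ℕ) (hk1 : 1 ≤ k) (hk2 : k < xs.length) :
    up (ch k xs) = mapB subs (ch (1 + k) xs) := by
  rw [Nat.add_comm]
  induction xs generalizing k with
  | nil => simp at hk2
  | cons x xs ih =>
    obtain ⟨j, rfl⟩ : ∃ j, k = j + 1 := ⟨k - 1, by omega⟩
    have hj : j < xs.length := by simpa using hk2
    rw [ch_cons_lt j x xs hk2]
    rcases Nat.lt_or_ge (j+1) xs.length with hlt | hge
    · -- internal case: ch (j+1) xs is a node
      rw [ch_cons_lt (j+1) x xs (by simp; omega)]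
      obtain ⟨a, b, hab⟩ := ch_isN (j+1) xs (by omega) hlt
      have ihj1 := ih (j+1) (by omega) hlt
      rw [hab] at ihj1 ⊢
      cases j with
      | zero =>
        rw [ch_zero xs]
        have h1 : mapB (fun q => [[x], q]) (B.N a b)
            = mapB (fun q => subs (x :: q)) (B.N a b) := by
          rw [← hab]
          exact mapB_ch_one _ _ (by intro y; simp [subs]) xs (by omega)
        calc up (B.N (mapB (x :: ·) (B.T ([] : List α))) (B.N a b))
            = B.N (mapB (fun q => [[x], q]) (B.N a b)) (up (B.N a b)) := by simp [mapB, up]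
          _ = B.N (mapB (fun q => subs (x :: q)) (B.N a b)) (mapB subs (ch (0+1+1) xs)) := by
              rw [h1, ihj1]
          _ = mapB subs (B.N (mapB (x :: ·) (B.N a b)) (ch (0+1+1) xs)) := by
              simp [mapB, mapB_mapB]
      | succ i =>
        obtain ⟨c, d, hcd⟩ := ch_isN (i+1) xs (by omega) (by omega)
        have ihi := ih (i+1) (by omega) (by omega)
        rw [hcd, hab] at ihi
        rw [hcd]
        have hup : up (mapB (x :: ·) (B.N c d))
            = mapB (fun q => List.map (x :: ·) (subs q)) (B.N a b) := by
          rw [up_mapB, ihi, mapB_mapB]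
        calc up (B.N (mapB (x :: ·) (B.N c d)) (B.N a b))
            = B.N (zipBW snoc (up (mapB (x :: ·) (B.N c d))) (B.N a b)) (up (B.N a b)) := by
              simp [mapB, up]
          _ = B.N (mapB (fun q => snoc (List.map (x :: ·) (subs q)) q) (B.N a b))
                (mapB subs (ch (i+1+1+1) xs)) := by
              rw [hup, zipBW_mapB_self, ihj1]
          _ = mapB subs (B.N (mapB (x :: ·) (B.N a b)) (ch (i+1+1+1) xs)) := by
              simp [mapB, mapB_mapB, snoc, subs]
    · -- boundary case: j + 1 = xs.length
      have hlen : j + 1 = xs.length := by omega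
      rw [ch_eq_tip j xs hlen]
      rw [ch_eq_tip (j+1) (x :: xs) (by simp [← hlen])]
      cases j with
      | zero =>
        obtain ⟨y, rfl⟩ := List.length_eq_one_iff.mp hlen.symm
        simp [ch, up, mapB, subs]
      | succ i =>
        obtain ⟨c, d, hcd⟩ := ch_isN (i+1) xs (by omega) (by omega)
        have ihj := ih (i+1) (by omega) (by omega)
        rw [hcd, ch_eq_tip (i+1) xs hlen] at ihj
        simp only [mapB] at ihj
        rw [hcd]
        calc up (B.N (mapB (x :: ·) (B.N c d)) (B.T xs))
            = B.T (unT (up (mapB (x :: ·) (B.N c d))) ++ [xs]) := by simp [mapB, up]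
          _ = B.T (unT (mapB (List.map (x :: ·)) (B.T (subs xs))) ++ [xs]) := by
              rw [up_mapB, ihj]
          _ = B.T (List.map (x :: ·) (subs xs) ++ [xs]) := by rw [unT_mapB]; rfl
          _ = mapB subs (B.T (x :: xs)) := by simp [mapB, subs]
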